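/- Let h(x,x') ≥ 0 be a measurable function of pairs of i.i.d. draws from P with CDF H(t) = P(h ≤ t), and let D(X,t) = (2/n)Σ_{i=1}^{n/2} 1{h(x_i, x_{i+n/2}) ≤ t} be the empirical CDF based on n/2 independent pairs. Let d_δ(X) be the smallest d with D(X,d) ≥ 1−δ and h_{δ'} the (1−δ') quantile of H, with δ < δ'. Then for x, x' fresh independent draws from P, P(h(x,x') > d_δ(X)) ≤ δ' + 2e^{-(δ'−δ)^2 n}. -/

import Mathlib

/-!
Let `c` be a `(1 - δ')`-quantile of the law of `h(x, x')` under `P ⊗ P`. If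
`h(x, x') > d_δ(X)`, then either `h(x, x') > c`, which has probability at most `δ'`, or
`d_δ(X) < c`. The latter forces at least `(1 - δ) m` of the `m` independent pair scores
`h(x_i, x_{i+m})` to lie below `c`, although each one does so with probability at most
`1 - δ'`; by Hoeffding's inequality this has probability at most `exp (-2 m (δ' - δ)²)`.
-/

open MeasureTheory

/-- The paired empirical CDF `D(X,t) = (2/n) Σ_{i=1}^{n/2} 1{h(x_i, x_{i+n/2}) ≤ t}`
based on a sample of size `n = 2m`. -/
noncomputable def Demp {𝒳 : Type*} (h : 𝒳 → 𝒳 → ℝ) (m : ℕ)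
    (X : Fin (2 * m) → 𝒳) (t : ℝ) : ℝ :=
  (2 / (2 * m : ℝ)) *
    ((Finset.univ.filter fun i : Fin m =>
        h (X ⟨i.1, by have := i.isLt; omega⟩) (X ⟨i.1 + m, by have := i.isLt; omega⟩) ≤ t).card : ℝ)

/-- The empirical `(1-δ)`-quantile: the smallest `d` with `D(X,d) ≥ 1-δ`. -/
noncomputable def dquant {𝒳 : Type*} (h : 𝒳 → 𝒳 → ℝ) (m : ℕ) (δ : ℝ)
    (X : Fin (2 * m) → 𝒳) : ℝ :=
  sInf {d : ℝ | 1 - δ ≤ Demp h m X d}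

open Finset ProbabilityTheory Set

def samplePairs {𝒳 : Type*} {m : ℕ} (X : Fin (2 * m) → 𝒳) (i : Fin m) : 𝒳 × 𝒳 :=
  (X ⟨i, by omega⟩, X ⟨i + m, by omega⟩)

theorem Demp_eq_card_div {𝒳 : Type*} (h : 𝒳 → 𝒳 → ℝ) (m : ℕ) (X : Fin (2 * m) → 𝒳) (t : ℝ) :
    Demp h m X t = (#{i | Function.uncurry h (samplePairs X i) ≤ t} : ℝ) / m := by
  rw [Demp, div_mul_eq_mul_div, mul_div_mul_left _ _ two_ne_zero]
  rfl

theorem measurePreserving_samplePairs {𝒳 : Type*} [MeasurableSpace 𝒳] (P : Measure 𝒳)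
    [SigmaFinite P] (m : ℕ) :
    MeasurePreserving (samplePairs (m := m)) (Measure.pi fun _ : Fin (2 * m) => P)
      (Measure.pi fun _ : Fin m => P.prod P) := by
  let e : Fin m ⊕ Fin m ≃ Fin (2 * m) := finSumFinEquiv.trans (finCongr (two_mul m).symm)
  have split := ((measurePreserving_arrowProdEquivProdArrow 𝒳 𝒳 (Fin m) (fun _ => P)
    (fun _ => P)).symm _).comp <| (measurePreserving_sumPiEquivProdPi fun _ => P).comp <|
      (measurePreserving_piCongrLeft (fun _ : Fin (2 * m) => P) e).symm _
  convert split using 1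
  funext X i
  simp only [samplePairs, MeasurableEquiv.arrowProdEquivProdArrow, MeasurableEquiv.symm_mk,
    MeasurableEquiv.coe_mk, MeasurableEquiv.sumPiEquivProdPi, MeasurableEquiv.piCongrLeft,
    Equiv.trans_apply, Function.comp_apply, Equiv.sumPiEquivProdPi_apply,
    Equiv.piCongrLeft_symm_apply, finSumFinEquiv_apply_left, finCongr_apply,
    finSumFinEquiv_apply_right, Fin.natAdd_eq_addNat, Equiv.arrowProdEquivProdArrow_symm_apply,
    Prod.mk.injEq, e]
  exact ⟨rfl, rfl⟩

theorem le_card_filter_lt_of_sInf_lt {ι : Type*} [Fintype ι] (g : ι → ℝ) {a c : ℝ}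
    (ha : a ≤ Fintype.card ι) (hc : sInf {d | a ≤ #{i | g i ≤ d}} < c) :
    a ≤ #{i | g i < c} := by
  rcases le_or_gt a 0 with ha0 | ha0
  · exact ha0.trans (Nat.cast_nonneg _)
  obtain ⟨lo, hlo⟩ := Finite.bddBelow_range g
  obtain ⟨hi, hhi⟩ := Finite.bddAbove_range g
  have hne : {d | a ≤ #{i | g i ≤ d}}.Nonempty := by
    refine ⟨hi, ?_⟩
    simpa [Finset.filter_true_of_mem fun i _ => hhi (mem_range_self i)] using ha
  have hbdd : BddBelow {d | a ≤ #{i | g i ≤ d}} := by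
    refine ⟨lo, fun d hd => ?_⟩
    obtain ⟨i, hi⟩ : (Finset.univ.filter fun i => g i ≤ d).Nonempty := by
      rw [← Finset.card_pos]
      exact_mod_cast ha0.trans_le hd
    exact (hlo (mem_range_self i)).trans (Finset.mem_filter.1 hi).2
  obtain ⟨d, hd, hdc⟩ := (csInf_lt_iff hbdd hne).1 hc
  refine hd.trans (Nat.cast_le.2 (Finset.card_le_card fun i hi => ?_))
  simp only [Finset.mem_filter] at hi ⊢
  exact ⟨hi.1, hi.2.trans_lt hdc⟩

theorem exists_measureReal_Iio_le_and_measureReal_Ioi_le (μ : Measure ℝ)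
    [IsProbabilityMeasure μ] {q : ℝ} (hq0 : 0 < q) (hq1 : q < 1) :
    ∃ c, μ.real (Iio c) ≤ q ∧ μ.real (Ioi c) ≤ 1 - q := by
  set S := {t | q ≤ cdf μ t}
  have hne : S.Nonempty := ((tendsto_cdf_atTop (μ := μ)).eventually (eventually_ge_nhds hq1)).exists
  have hbdd : BddBelow S := by
    obtain ⟨b, hb⟩ :=
      ((tendsto_cdf_atBot (μ := μ)).eventually (eventually_lt_nhds hq0)).exists_forall_of_atBot
    exact ⟨b, fun t ht => le_of_not_gt fun htb => (hb t htb.le).not_ge ht⟩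
  refine ⟨sInf S, ?_, ?_⟩
  · have hleft : Function.leftLim (cdf μ) (sInf S) ≤ q := by
      refine le_of_tendsto ((monotone_cdf μ).tendsto_leftLim _) ?_
      filter_upwards [self_mem_nhdsWithin] with t (ht : t < sInf S)
      exact le_of_lt (not_le.1 fun h => (csInf_le hbdd h).not_gt ht)
    rw [measureReal_def, ← measure_cdf μ, StieltjesFunction.measure_Iio _ (tendsto_cdf_atBot μ),
      sub_zero, ENNReal.toReal_ofReal']
    exact max_le hleft hq0.le
  · have hright : q ≤ cdf μ (sInf S) := by
      refine ge_of_tendsto ((cdf μ).right_continuous _ |>.mono_left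
        (nhdsWithin_mono _ Ioi_subset_Ici_self)) ?_
      filter_upwards [self_mem_nhdsWithin] with t (ht : sInf S < t)
      obtain ⟨u, hu, hut⟩ := (csInf_lt_iff hbdd hne).1 ht
      exact hu.trans (monotone_cdf μ hut.le)
    rw [← compl_Iic, measureReal_compl measurableSet_Iic, probReal_univ, ← cdf_eq_real]
    linarith

theorem measureReal_card_filter_mem_ge_le {α ι : Type*} [MeasurableSpace α] [Fintype ι]
    (μ : Measure α) [IsProbabilityMeasure μ] {s : Set α} [DecidablePred (· ∈ s)]
    (hs : MeasurableSet s) {t : ℝ} (ht : 0 ≤ t) :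
    (Measure.pi fun _ : ι => μ).real {z | (μ.real s + t) * Fintype.card ι ≤ #{i | z i ∈ s}}
      ≤ Real.exp (-2 * t ^ 2 * Fintype.card ι) := by
  set ν := Measure.pi fun _ : ι => μ
  set Y : ι → (ι → α) → ℝ := fun i z => s.indicator 1 (z i)
  have hY_mean : ∀ i, ν[Y i] = μ.real s := fun i => by
    rw [integral_comp_eval (measurable_const.indicator hs).aestronglyMeasurable,
      integral_indicator_one hs]
  have hsubG : ∀ i ∈ (univ : Finset ι),
      HasSubgaussianMGF (fun z => Y i z - μ.real s) (1 / 4) ν := by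
    intro i _
    have hY_mem : ∀ z, Y i z ∈ Icc (0 : ℝ) 1 := fun z => by
      by_cases hz : z i ∈ s <;> simp [Y, hz]
    have hY_meas : Measurable (Y i) :=
      (measurable_const.indicator hs).comp (measurable_pi_apply i)
    have := hasSubgaussianMGF_of_mem_Icc hY_meas.aemeasurable (ae_of_all ν hY_mem)
    rwa [hY_mean, show ((‖(1 : ℝ) - 0‖₊ / 2) ^ 2 : NNReal) = 1 / 4 by norm_num] at this
  have hindep : iIndepFun (fun i z => Y i z - μ.real s) ν :=
    iIndepFun_pi (X := fun _ x => s.indicator 1 x - μ.real s) fun _ =>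
      ((measurable_const.indicator hs).sub_const _).aemeasurable
  have hsum : ∀ z, ∑ i, (Y i z - μ.real s) = #{i | z i ∈ s} - μ.real s * Fintype.card ι := by
    intro z
    simp only [Y, sum_sub_distrib, sum_indicator_eq_sum_filter, Pi.one_apply, sum_const,
      nsmul_eq_mul, card_univ]
    ring
  calc ν.real {z | (μ.real s + t) * Fintype.card ι ≤ #{i | z i ∈ s}}
      ≤ ν.real {z | t * Fintype.card ι ≤ ∑ i, (Y i z - μ.real s)} :=
        measureReal_mono fun z hz => by
          rw [Set.mem_ofPred_eq] at hz ⊢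
          rw [hsum]
          linarith
    _ ≤ Real.exp (-(t * Fintype.card ι) ^ 2 / (2 * ∑ i : ι, (1 / 4 : NNReal))) :=
        HasSubgaussianMGF.measure_sum_ge_le_of_iIndepFun hindep hsubG (by positivity)
    _ = Real.exp (-2 * t ^ 2 * Fintype.card ι) := by
      congr 1
      rcases eq_or_ne (Fintype.card ι) 0 with h0 | h0
      · simp [h0]
      · simp only [sum_const, card_univ, nsmul_eq_mul, NNReal.coe_mul, NNReal.coe_natCast]
        field_simp
        norm_num
        ring

theorem measureReal_dquant_lt_le {𝒳 : Type*} [MeasurableSpace 𝒳] (P : Measure 𝒳)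
    [IsProbabilityMeasure P] (h : 𝒳 → 𝒳 → ℝ) (hmeas : Measurable (Function.uncurry h))
    {m : ℕ} (hm : 0 < m) {δ ε c : ℝ} (hδ : 0 ≤ δ) (hε : 0 ≤ ε)
    (hp : (P.prod P).real (Function.uncurry h ⁻¹' Iio c) + ε ≤ 1 - δ) :
    (Measure.pi fun _ : Fin (2 * m) => P).real (dquant h m δ ⁻¹' Iio c)
      ≤ Real.exp (-ε ^ 2 * (2 * m)) := by
  set s := {z : 𝒳 × 𝒳 | Function.uncurry h z < c}
  set E := {z : Fin m → 𝒳 × 𝒳 | ((P.prod P).real s + ε) * Fintype.card (Fin m) ≤ #{i | z i ∈ s}}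
  have hm' : (0 : ℝ) < m := Nat.cast_pos.2 hm
  have hsub : dquant h m δ ⁻¹' Iio c ⊆ samplePairs ⁻¹' E := by
    intro X hX
    have hdquant : dquant h m δ X =
        sInf {d | (1 - δ) * m ≤ #{i | Function.uncurry h (samplePairs X i) ≤ d}} := by
      simp_rw [dquant, Demp_eq_card_div, le_div_iff₀ hm']
    rw [Set.mem_preimage, Set.mem_Iio, hdquant] at hX
    have hcount := le_card_filter_lt_of_sInf_lt _
      (by simpa using mul_le_of_le_one_left hm'.le (by linarith : 1 - δ ≤ 1)) hX
    simp only [E, Set.mem_preimage, Set.mem_ofPred_eq, Fintype.card_fin]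
    exact (mul_le_mul_of_nonneg_right hp hm'.le).trans hcount
  calc (Measure.pi fun _ : Fin (2 * m) => P).real (dquant h m δ ⁻¹' Iio c)
      ≤ (Measure.pi fun _ : Fin (2 * m) => P).real (samplePairs ⁻¹' E) := measureReal_mono hsub
    _ ≤ (Measure.pi fun _ : Fin m => P.prod P).real E := by
      refine ENNReal.toReal_mono (measure_ne_top _ _) ?_
      rw [← (measurePreserving_samplePairs P m).map_eq]
      exact Measure.le_map_apply (measurePreserving_samplePairs P m).aemeasurable E
    _ ≤ Real.exp (-2 * ε ^ 2 * Fintype.card (Fin m)) :=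
      measureReal_card_filter_mem_ge_le _ (measurableSet_lt hmeas measurable_const) hε
    _ = Real.exp (-ε ^ 2 * (2 * m)) := by
      rw [Fintype.card_fin]
      ring_nf

theorem measureReal_prod_setOf_lt_le {α β : Type*} [MeasurableSpace α] [MeasurableSpace β]
    (μ : Measure α) (ν : Measure β) [IsProbabilityMeasure μ] [IsProbabilityMeasure ν]
    (f : α → ℝ) (g : β → ℝ) (c : ℝ) :
    (μ.prod ν).real {ω | f ω.1 < g ω.2} ≤ μ.real (f ⁻¹' Iio c) + ν.real (g ⁻¹' Ioi c) := by
  have hsplit : {ω : α × β | f ω.1 < g ω.2} ⊆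
      (f ⁻¹' Iio c) ×ˢ Set.univ ∪ Set.univ ×ˢ (g ⁻¹' Ioi c) := by
    intro ω hω
    rw [Set.mem_ofPred_eq] at hω
    by_cases hc : c < g ω.2
    · exact Or.inr ⟨trivial, hc⟩
    · exact Or.inl ⟨hω.trans_le (not_lt.1 hc), trivial⟩
  calc _ ≤ _ := measureReal_mono hsplit
    _ ≤ _ := measureReal_union_le _ _
    _ = _ := by
      rw [measureReal_prod_prod, measureReal_prod_prod, probReal_univ, probReal_univ, mul_one,
        one_mul]

theorem stmt14_general {𝒳 : Type*} [MeasurableSpace 𝒳] (P : Measure 𝒳) [IsProbabilityMeasure P]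
    (h : 𝒳 → 𝒳 → ℝ) (hmeas : Measurable (Function.uncurry h))
    (m : ℕ) (hm : 0 < m) (δ δ' : ℝ) (hδ : 0 < δ) (hδδ' : δ < δ') (hδ'1 : δ' < 1) :
    ((Measure.pi fun _ : Fin (2 * m) => P).prod (P.prod P))
        {ω | dquant h m δ ω.1 < h ω.2.1 ω.2.2}
      ≤ ENNReal.ofReal (δ' + 2 * Real.exp (-(δ' - δ) ^ 2 * (2 * m))) := by
  have := Measure.isProbabilityMeasure_map (μ := P.prod P) hmeas.aemeasurable
  obtain ⟨c, hlow, hhigh⟩ := exists_measureReal_Iio_le_and_measureReal_Ioi_le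
    ((P.prod P).map (Function.uncurry h)) (q := 1 - δ') (by linarith) (by linarith)
  rw [map_measureReal_apply hmeas measurableSet_Iio] at hlow
  rw [map_measureReal_apply hmeas measurableSet_Ioi, sub_sub_cancel] at hhigh
  have hsample := measureReal_dquant_lt_le P h hmeas hm hδ.le (ε := δ' - δ) (by linarith)
    (by linarith)
  rw [ENNReal.le_ofReal_iff_toReal_le (measure_ne_top _ _)
    (by linarith [Real.exp_pos (-(δ' - δ) ^ 2 * (2 * m))])]
  calc _ ≤ _ := measureReal_prod_setOf_lt_le _ _ (dquant h m δ) (Function.uncurry h) c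
    _ ≤ δ' + 2 * Real.exp (-(δ' - δ) ^ 2 * (2 * m)) := by
      linarith [Real.exp_pos (-(δ' - δ) ^ 2 * (2 * m))]

/-- **The empirical quantile is a valid high-probability sensitivity bound.** For
`δ < δ'` and a fresh independent pair `(x,x') ~ P ⊗ P`,
`P(h(x,x') > d_δ(X)) ≤ δ' + 2 e^{-(δ'-δ)² n}` with `n = 2m`. -/
theorem stmt14 {𝒳 : Type*} [MeasurableSpace 𝒳] (P : Measure 𝒳) [IsProbabilityMeasure P]
    (h : 𝒳 → 𝒳 → ℝ) (hmeas : Measurable (Function.uncurry h)) (hnn : ∀ x y, 0 ≤ h x y)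
    (m : ℕ) (hm : 0 < m) (δ δ' : ℝ) (hδ : 0 < δ) (hδδ' : δ < δ') (hδ'1 : δ' < 1) :
    ((Measure.pi fun _ : Fin (2 * m) => P).prod (P.prod P))
        {ω | dquant h m δ ω.1 < h ω.2.1 ω.2.2}
      ≤ ENNReal.ofReal (δ' + 2 * Real.exp (-(δ' - δ) ^ 2 * (2 * m))) :=
  stmt14_general P h hmeas m hm δ δ' hδ hδδ' hδ'1
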